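/- The three open intervals (λ₁(F_i, 1⁸), λ₁(F_i, 0^∞)) for i ∈ {1,2,3} cover the interval (-λ', -λ*); that is, every real number in (-λ', -λ*) lies in at least one of these three intervals. -/

import Mathlib

/-- A rooted graph: a finite simple graph with a distinguished root vertex. -/
structure RootedGraph where
  V : Type
  [fintypeV : Fintype V]
  G : SimpleGraph V
  root : V

attribute [instance] RootedGraph.fintypeV

/-- One-step extension of a rooted graph: attach a new path vertex (the new root)
to the old root, together with a clique of `k` new vertices each adjacent to
both the old root and the new path vertex. -/
def RootedGraph.extend (F : RootedGraph) (k : ℕ) : RootedGraph where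
  V := F.V ⊕ Option (Fin k)
  G :=
    { Adj := fun a b =>
        match a, b with
        | Sum.inl u, Sum.inl w => F.G.Adj u w
        | Sum.inl u, Sum.inr _ => u = F.root
        | Sum.inr _, Sum.inl w => w = F.root
        | Sum.inr x, Sum.inr y => x ≠ y
      symm := by
        constructor
        rintro (u | x) (w | y) h
        · exact F.G.adj_symm h
        · exact h
        · exact h
        · exact h.symm
      loopless := by
        constructor
        rintro (u | x) h
        · exact F.G.loopless.irrefl u h
        · exact h rfl }
  root := Sum.inr none

/-- The rowing graph `(F, a)`. -/
def RootedGraph.rowing (F : RootedGraph) (a : List ℕ) : RootedGraph :=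
  a.foldl RootedGraph.extend F

open scoped Classical in
/-- Adjacency matrix of (the graph of) a rooted graph. -/
noncomputable def RootedGraph.adjMat (F : RootedGraph) : Matrix F.V F.V ℝ :=
  Matrix.of fun u v => if F.G.Adj u v then 1 else 0

/-- The smallest adjacency eigenvalue of a rooted graph. -/
noncomputable def RootedGraph.lam1 (F : RootedGraph) : ℝ :=
  sInf {t : ℝ | ∃ x : F.V → ℝ, x ≠ 0 ∧ F.adjMat.mulVec x = t • x}

/-- `F₁`: the path on 4 vertices `u₁u₂u₃u₄` rooted at `u₃`. -/
def F1 : RootedGraph := { V := Fin 4, G := SimpleGraph.pathGraph 4, root := 2 }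

/-- `F₂`: the fan consisting of a path `p₁p₂p₃p₄` (vertices `0,1,2,3`) together with an
apex `r` (vertex `4`) adjacent to `p₁, p₂, p₃, p₄`, rooted at the apex `r`. -/
def F2 : RootedGraph :=
  { V := Fin 5,
    G := SimpleGraph.fromRel fun i j => (i.val + 1 = j.val ∧ j.val ≤ 3) ∨ i.val = 4,
    root := 4 }

/-- `F₃`: the path on 6 vertices `w₁w₂w₃w₄w₅w₆` rooted at `w₅`. -/
def F3 : RootedGraph := { V := Fin 6, G := SimpleGraph.pathGraph 6, root := 4 }

/-!
Both bounds come from the quadratic form `xᵀAx + μ‖x‖²`: it is nonnegative everywhere exactly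
when `λ₁ ≥ -μ`, and one vector where it is negative gives `λ₁ < -μ`.

For the limits, take `μ = s + s⁻¹` and ask that `x_root² ≤ s · (xᵀAx + μ‖x‖²)`. Attaching a
pendant vertex at the root preserves this inequality, so a sum-of-squares certificate for `F`
alone gives `λ₁(F, 0ⁿ) ≥ -(s + s⁻¹)` for every `n`. Taking `s = √ρ` for `F₁` gives exactly `-λ*`
(this uses `√ρ⁶ = √ρ² + 1`). For `F₂` and `F₃` a rational `s` is enough. Explicit test vectors on
the graphs `(F_i, 1⁸)` give upper bounds, and the resulting numbers interlace as
`λ₁(F₃,1⁸) < -λ'`, `λ₁(F₂,1⁸) < L₃` and `λ₁(F₁,1⁸) < L₂`.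
-/

open Matrix Filter Topology

namespace Matrix

variable {n : Type*} [Fintype n]

theorem bddBelow_setOf_eigenvalue (A : Matrix n n ℝ) :
    BddBelow {t : ℝ | ∃ x : n → ℝ, x ≠ 0 ∧ A *ᵥ x = t • x} :=
  BddBelow.mono (fun _ ⟨_, hx, hAx⟩ => Module.End.hasEigenvalue_of_hasEigenvector
      ⟨Module.End.mem_eigenspace_iff.mpr hAx, hx⟩)
    (Module.End.finite_hasEigenvalue A.mulVecLin).bddBelow

theorem IsHermitian.mul_dotProduct_self_le_dotProduct_mulVec [DecidableEq n] {A : Matrix n n ℝ}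
    (hA : A.IsHermitian) {c : ℝ} (hc : ∀ t x, x ≠ 0 → A *ᵥ x = t • x → c ≤ t) (z : n → ℝ) :
    c * (z ⬝ᵥ z) ≤ z ⬝ᵥ A *ᵥ z := by
  set B := A - c • (1 : Matrix n n ℝ)
  have hB : B.IsHermitian := hA.sub (isHermitian_one.smul (IsSelfAdjoint.all c))
  have hBpsd : B.PosSemidef := hB.posSemidef_iff_eigenvalues_nonneg.mpr fun i => by
    have hv := hB.mulVec_eigenvectorBasis i
    have hne : ⇑(hB.eigenvectorBasis i) ≠ 0 :=
      (WithLp.ofLp_eq_zero 2).ne.2 <| hB.eigenvectorBasis.orthonormal.ne_zero i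
    have hA_eigen :
        A *ᵥ ⇑(hB.eigenvectorBasis i) = (hB.eigenvalues i + c) • ⇑(hB.eigenvectorBasis i) := by
      rw [add_smul, ← hv]
      simp [B, sub_mulVec, smul_mulVec]
    exact le_add_iff_nonneg_left c |>.mp (hc _ _ hne hA_eigen)
  have hBz : z ⬝ᵥ B *ᵥ z = z ⬝ᵥ A *ᵥ z - c * (z ⬝ᵥ z) := by
    simp [B, sub_mulVec, smul_mulVec, dotProduct_sub]
  have := hBpsd.dotProduct_mulVec_nonneg z
  rw [star_trivial, hBz] at this
  linarith

end Matrix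

namespace RootedGraph

noncomputable def quadForm (F : RootedGraph) (μ : ℝ) (x : F.V → ℝ) : ℝ :=
  x ⬝ᵥ F.adjMat *ᵥ x + μ * (x ⬝ᵥ x)

theorem adjMat_isHermitian (F : RootedGraph) : F.adjMat.IsHermitian := by
  classical
  exact F.G.isHermitian_adjMatrix ℝ

theorem lam1_le_of_mulVec_eq {F : RootedGraph} {t : ℝ} {x : F.V → ℝ} (hx : x ≠ 0)
    (hAx : F.adjMat *ᵥ x = t • x) : F.lam1 ≤ t :=
  csInf_le (bddBelow_setOf_eigenvalue _) ⟨x, hx, hAx⟩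

theorem lam1_lt_of_quadForm_neg (F : RootedGraph) {μ : ℝ} (z : F.V → ℝ)
    (hz : F.quadForm μ z < 0) : F.lam1 < -μ := by
  classical
  by_contra! h
  have := F.adjMat_isHermitian.mul_dotProduct_self_le_dotProduct_mulVec
    (fun _ _ hx hAx => h.trans (lam1_le_of_mulVec_eq hx hAx)) z
  rw [quadForm] at hz
  linarith

theorem neg_le_lam1_of_quadForm_nonneg (F : RootedGraph) {μ : ℝ} (hμ : 0 ≤ μ)
    (h : ∀ x, 0 ≤ F.quadForm μ x) : -μ ≤ F.lam1 := by
  refine Real.le_sInf (fun t ⟨x, hx, hAx⟩ => ?_) (neg_nonpos.mpr hμ)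
  have hxx : 0 < x ⬝ᵥ x := by simpa using dotProduct_star_self_pos_iff.mpr hx
  have hQ := h x
  rw [quadForm, hAx, dotProduct_smul, smul_eq_mul, ← add_mul] at hQ
  linarith [(mul_nonneg_iff_of_pos_right hxx).mp hQ]

theorem quadForm_extend (F : RootedGraph) (k : ℕ) (μ : ℝ) (y : F.V → ℝ)
    (w : Option (Fin k) → ℝ) :
    (F.extend k).quadForm μ (Sum.elim y w) = F.quadForm μ y + 2 * y F.root * ∑ o, w o
      + (∑ o, w o) ^ 2 + (μ - 1) * ∑ o, w o ^ 2 := by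
  -- `adjMat` decides adjacency classically; `hclique` must use the same instances to rewrite.
  let := Classical.propDecidable
  have hclique (a : Option (Fin k)) : ∑ o, (if a ≠ o then 1 else 0) * w o = ∑ o, w o - w a := by
    simp [ite_mul, Finset.sum_ite, Finset.filter_ne, Finset.sum_erase_eq_sub]
  unfold extend
  simp only [quadForm, adjMat, dotProduct, mulVec, Matrix.of_apply, Fintype.sum_sum_type,
    Sum.elim_inl, Sum.elim_inr, hclique]
  simp only [ite_mul, one_mul, zero_mul, Finset.sum_ite_eq', Finset.sum_ite_irrel,
    Finset.sum_const_zero, Finset.mem_univ, if_true]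
  simp only [mul_add, mul_sub, Finset.sum_add_distrib, Finset.sum_sub_distrib, mul_ite,
    mul_zero, Finset.sum_ite_eq', Finset.mem_univ, if_true, ← Finset.sum_mul, ← sq]
  ring

theorem rowing_replicate_succ (F : RootedGraph) (n k : ℕ) :
    F.rowing (List.replicate (n + 1) k) = (F.rowing (List.replicate n k)).extend k := by
  rw [rowing, List.replicate_succ', List.foldl_append]
  rfl

@[simp] theorem extend_root (F : RootedGraph) (k : ℕ) : (F.extend k).root = Sum.inr none := rfl

def DominatesRoot (F : RootedGraph) (s : ℝ) : Prop :=
  ∀ x : F.V → ℝ, x F.root ^ 2 ≤ s * F.quadForm (s + s⁻¹) x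

section

variable {F : RootedGraph} {s : ℝ}

-- `r² + 2s·ry + (s² + 1)y² = (r + sy)² + y²`
theorem DominatesRoot.extend_zero (hs : s ≠ 0) (h : F.DominatesRoot s) :
    (F.extend 0).DominatesRoot s := by
  intro x
  obtain ⟨y, w, rfl⟩ : ∃ y w, x = Sum.elim y w := ⟨_, _, (Sum.elim_comp_inl_inr x).symm⟩
  simp only [quadForm_extend, Fintype.sum_option, Finset.univ_eq_empty, Finset.sum_empty,
    add_zero, extend_root, Sum.elim_inr]
  nlinarith [h y, sq_nonneg (y F.root + s * w none), mul_inv_cancel₀ hs]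

theorem DominatesRoot.rowing_replicate_zero (hs : s ≠ 0) (h : F.DominatesRoot s) (n : ℕ) :
    (F.rowing (List.replicate n 0)).DominatesRoot s := by
  induction n with
  | zero => exact h
  | succ n ih => rw [rowing_replicate_succ]; exact ih.extend_zero hs

theorem DominatesRoot.neg_le_lam1 (hs : 0 < s) (h : F.DominatesRoot s) :
    -(s + s⁻¹) ≤ F.lam1 :=
  F.neg_le_lam1_of_quadForm_nonneg (by positivity) fun x =>
    (mul_nonneg_iff_of_pos_left hs).mp ((sq_nonneg _).trans (h x))

theorem DominatesRoot.neg_le_of_tendsto (hs : 0 < s) (h : F.DominatesRoot s) {L : ℝ}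
    (hL : Tendsto (fun n => (F.rowing (List.replicate n 0)).lam1) atTop (𝓝 L)) :
    -(s + s⁻¹) ≤ L :=
  ge_of_tendsto' hL fun n => (h.rowing_replicate_zero hs.ne' n).neg_le_lam1 hs

/-- `y` is the value on the new root and `w` the value on the clique vertex. -/
def extendOneVec (x : F.V → ℝ) (y w : ℝ) : (F.extend 1).V → ℝ :=
  Sum.elim x fun o => o.elim y fun _ => w

@[simp] theorem extendOneVec_root (x : F.V → ℝ) (y w : ℝ) :
    extendOneVec x y w (F.extend 1).root = y := rfl

theorem quadForm_extendOneVec (μ : ℝ) (x : F.V → ℝ) (y w : ℝ) :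
    (F.extend 1).quadForm μ (extendOneVec x y w)
      = F.quadForm μ x + 2 * x F.root * (y + w) + 2 * y * w + μ * (y ^ 2 + w ^ 2) := by
  simp only [extendOneVec, quadForm_extend, Fintype.sum_option, Option.elim_none, Option.elim_some,
    Fin.sum_univ_one]
  ring

end

def rowingOnesVec : (F : RootedGraph) → (F.V → ℝ) → (l : List (ℝ × ℝ)) →
    (F.rowing (List.replicate l.length 1)).V → ℝ
  | _, x, [] => x
  | _, x, (y, w) :: l => rowingOnesVec _ (extendOneVec x y w) l

/-- Updates the pair (value of the form, value at the root) along `quadForm_extendOneVec`. -/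
def rowingOnesStep (μ : ℝ) (qr yw : ℝ × ℝ) : ℝ × ℝ :=
  (qr.1 + 2 * qr.2 * (yw.1 + yw.2) + 2 * yw.1 * yw.2 + μ * (yw.1 ^ 2 + yw.2 ^ 2), yw.1)

theorem quadForm_rowingOnesVec (F : RootedGraph) (μ : ℝ) (x : F.V → ℝ) (l : List (ℝ × ℝ)) :
    ((F.rowing (List.replicate l.length 1)).quadForm μ (rowingOnesVec F x l),
      rowingOnesVec F x l (F.rowing (List.replicate l.length 1)).root)
      = l.foldl (rowingOnesStep μ) (F.quadForm μ x, x F.root) := by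
  induction l generalizing F with
  | nil => rfl
  | cons yw l ih =>
    rw [List.foldl_cons, rowingOnesStep, ← extendOneVec_root x yw.1 yw.2,
      ← quadForm_extendOneVec]
    exact ih (F.extend 1) (extendOneVec x yw.1 yw.2)

theorem lam1_rowing_ones_lt (F : RootedGraph) {μ : ℝ} (x : F.V → ℝ) (l : List (ℝ × ℝ))
    (h : (l.foldl (rowingOnesStep μ) (F.quadForm μ x, x F.root)).1 < 0) :
    (F.rowing (List.replicate l.length 1)).lam1 < -μ :=
  lam1_lt_of_quadForm_neg _ (rowingOnesVec F x l) (by rwa [← quadForm_rowingOnesVec] at h)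

end RootedGraph

open RootedGraph

theorem quadForm_F1 (μ : ℝ) (x : Fin 4 → ℝ) :
    F1.quadForm μ x = 2 * (x 0 * x 1 + x 1 * x 2 + x 2 * x 3)
      + μ * (x 0 ^ 2 + x 1 ^ 2 + x 2 ^ 2 + x 3 ^ 2) := by
  unfold F1
  simp only [quadForm, adjMat, mulVec, dotProduct,
    Matrix.of_apply, Fin.sum_univ_four, SimpleGraph.pathGraph_adj]
  norm_num [show ((3 : Fin 4) : ℕ) = 3 from rfl]
  ring

theorem quadForm_F2 (μ : ℝ) (x : Fin 5 → ℝ) :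
    F2.quadForm μ x = 2 * (x 0 * x 1 + x 1 * x 2 + x 2 * x 3 + x 4 * (x 0 + x 1 + x 2 + x 3))
      + μ * (x 0 ^ 2 + x 1 ^ 2 + x 2 ^ 2 + x 3 ^ 2 + x 4 ^ 2) := by
  unfold F2
  simp only [quadForm, adjMat, mulVec, dotProduct,
    Matrix.of_apply, Fin.sum_univ_five, SimpleGraph.fromRel_adj]
  norm_num [show ((3 : Fin 5) : ℕ) = 3 from rfl, show ((4 : Fin 5) : ℕ) = 4 from rfl, Fin.ext_iff]
  ring

theorem quadForm_F3 (μ : ℝ) (x : Fin 6 → ℝ) :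
    F3.quadForm μ x = 2 * (x 0 * x 1 + x 1 * x 2 + x 2 * x 3 + x 3 * x 4 + x 4 * x 5)
      + μ * (x 0 ^ 2 + x 1 ^ 2 + x 2 ^ 2 + x 3 ^ 2 + x 4 ^ 2 + x 5 ^ 2) := by
  unfold F3
  simp only [quadForm, adjMat, mulVec, dotProduct,
    Matrix.of_apply, Fin.sum_univ_six, SimpleGraph.pathGraph_adj]
  norm_num [show ((3 : Fin 6) : ℕ) = 3 from rfl, show ((4 : Fin 6) : ℕ) = 4 from rfl,
    show ((5 : Fin 6) : ℕ) = 5 from rfl]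
  ring

theorem dominatesRoot_F1 {t : ℝ} (ht : t ^ 6 = t ^ 2 + 1) : F1.DominatesRoot t := by
  intro (x : Fin 4 → ℝ)
  have ht0 : t ≠ 0 := by rintro rfl; norm_num at ht
  show x 2 ^ 2 ≤ t * F1.quadForm (t + t⁻¹) x
  rw [← sub_nonneg]
  have key : (t ^ 2 + 1) * (t ^ 4 + t ^ 2 + 1) * (t * F1.quadForm (t + t⁻¹) x - x 2 ^ 2)
      = (t ^ 4 + t ^ 2 + 1) * ((t ^ 2 + 1) * x 0 + t * x 1) ^ 2
        + ((t ^ 4 + t ^ 2 + 1) * x 1 + t * (t ^ 2 + 1) * x 2) ^ 2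
        + (t ^ 4 + t ^ 2 + 1) * (t * x 2 + (t ^ 2 + 1) * x 3) ^ 2 := by
    rw [quadForm_F1]
    field_simp
    linear_combination (t ^ 2 * x 2 ^ 2) * ht
  have hpos : 0 < (t ^ 2 + 1) * (t ^ 4 + t ^ 2 + 1) := by positivity
  refine (mul_nonneg_iff_of_pos_left hpos).mp ?_
  rw [key]
  positivity

-- The squares below come from the LDLᵀ factorisation of `s (A + (s + s⁻¹) I) - e_root e_rootᵀ`.
theorem dominatesRoot_F2 : F2.DominatesRoot (2971 / 2500) := by
  intro (x : Fin 5 → ℝ)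
  show x 4 ^ 2 ≤ 2971 / 2500 * F2.quadForm (2971 / 2500 + (2971 / 2500)⁻¹) x
  rw [← sub_nonneg]
  have key : 2971 / 2500 * F2.quadForm (2971 / 2500 + (2971 / 2500)⁻¹) x - x 4 ^ 2
      = 15076841 / 6250000 * (x 0 + 7427500 / 15076841 * x 1 + 7427500 / 15076841 * x 4) ^ 2
      + 172143378289281 / 94230256250000
        * (x 1 + 111983236527500 / 172143378289281 * x 2 + 7427500 / 22504341 * x 4) ^ 2
      + 1763622854362335391321 / 1075896114308006250000
        * (x 2 + 1278594942243634627500 / 1763622854362335391321 * x 3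
          + 56815480277500 / 116975622039281 * x 4) ^ 2
      + 17093097425672490887863246961 / 11022642839764596195756250000
        * (x 3 + 111983236527500 / 284126614816781 * x 4) ^ 2
      + 435514717695018821 / 1775791342604881250000 * x 4 ^ 2 := by
    rw [quadForm_F2]
    ring
  rw [key]
  positivity

theorem dominatesRoot_F3 : F3.DominatesRoot (31 / 25) := by
  intro (x : Fin 6 → ℝ)
  show x 4 ^ 2 ≤ 31 / 25 * F3.quadForm (31 / 25 + (31 / 25)⁻¹) x
  rw [← sub_nonneg]
  have key : 31 / 25 * F3.quadForm (31 / 25 + (31 / 25)⁻¹) x - x 4 ^ 2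
      = 1586 / 625 * (x 0 + 775 / 1586 * x 1) ^ 2
      + 1914771 / 991250 * (x 1 + 1229150 / 1914771 * x 2) ^ 2
      + 2084235556 / 1196731875 * (x 2 + 1483947525 / 2084235556 * x 3) ^ 2
      + 2155538259941 / 1302647222500 * (x 3 + 1615282555900 / 2155538259941 * x 4) ^ 2
      + 819628286980801 / 1347211412463125 * (x 4 + 53888456498525 / 26439622160671 * x 5) ^ 2
      + 5473772918301 / 533056898400625 * x 5 ^ 2 := by
    rw [quadForm_F3]
    ring
  rw [key]
  positivity

theorem lam1_F1_rowing_ones_lt :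
    (F1.rowing (List.replicate 8 1)).lam1 < -(2971 / 2500 + (2971 / 2500)⁻¹) :=
  lam1_rowing_ones_lt F1 ![17939, -36415, 55980, -27577]
    [(-43487, -6154), (33557, 4892), (-25606, -3917), (19164, 3174), (-13852, -2617),
      (9356, 2215), (-5411, -1943), (1786, 1786)] (by
    simp only [quadForm_F1, show F1.root = (2 : Fin 4) from rfl, Matrix.cons_val,
      List.foldl_cons, List.foldl_nil, rowingOnesStep]
    norm_num)

theorem lam1_F2_rowing_ones_lt :
    (F2.rowing (List.replicate 8 1)).lam1 < -(31 / 25 + (31 / 25)⁻¹) :=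
  lam1_rowing_ones_lt F2 ![24471, 12515, 12515, 24471, -62602]
    [(46092, 8067), (-33795, -6008), (24588, 4498), (-17629, -3400), (12282, 2613),
      (-8057, -2064), (4570, 1704), (-1500, -1500)] (by
    simp only [quadForm_F2, show F2.root = (4 : Fin 5) from rfl, Matrix.cons_val,
      List.foldl_cons, List.foldl_nil, rowingOnesStep]
    norm_num)

theorem lam1_F3_rowing_ones_lt :
    (F3.rowing (List.replicate 8 1)).lam1 < -(102909 / 50000) :=
  lam1_rowing_ones_lt F3 ![-8845, 18254, -28830, 41248, -56302, 27279]
    [(39561, 8111), (-27724, -5735), (19323, 4070), (-13317, -2910), (8962, 2110),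
      (-5717, -1572), (3180, 1229), (-1038, -1038)] (by
    simp only [quadForm_F3, show F3.root = (4 : Fin 6) from rfl, Matrix.cons_val,
      List.foldl_cons, List.foldl_nil, rowingOnesStep]
    norm_num)

theorem sqrt_two_add_sqrt_five_le : √(2 + √5) ≤ 102909 / 50000 := by
  have h5 : √5 ≤ 2.2361 := Real.sqrt_le_iff.mpr ⟨by norm_num, by norm_num⟩
  exact Real.sqrt_le_iff.mpr ⟨by norm_num, by linarith⟩

theorem mem_Ioo_or_mem_Ioo_or_mem_Ioo {α : Type*} [LinearOrder α] {a b l₁ u₁ l₂ u₂ l₃ u₃ : α}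
    (h₃ : l₃ ≤ a) (h₂₃ : l₂ < u₃) (h₁₂ : l₁ < u₂) (h₁ : b ≤ u₁) :
    ∀ x ∈ Set.Ioo a b, x ∈ Set.Ioo l₁ u₁ ∨ x ∈ Set.Ioo l₂ u₂ ∨ x ∈ Set.Ioo l₃ u₃ := by
  rintro x ⟨hax, hxb⟩
  rcases lt_or_ge x u₃ with hx₃ | hx₃
  · exact Or.inr (Or.inr ⟨h₃.trans_lt hax, hx₃⟩)
  rcases lt_or_ge x u₂ with hx₂ | hx₂
  · exact Or.inr (Or.inl ⟨h₂₃.trans_le hx₃, hx₂⟩)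
  · exact Or.inl ⟨h₁₂.trans_le hx₂, hxb.trans_le h₁⟩

/-- The three open intervals `(λ₁(F_i, 1⁸), λ₁(F_i, 0^∞))`, `i ∈ {1,2,3}`, cover the
interval `(-λ', -λ*)`, where `λ' = √(2 + √5)`, `λ* = √ρ + 1/√ρ`, and `ρ` is the unique
real root of `x³ = x + 1`. -/
theorem intervals_cover (ρ : ℝ) (hρ : ρ ^ 3 = ρ + 1)
    (lamStar : ℝ) (hlamStar : lamStar = Real.sqrt ρ + (Real.sqrt ρ)⁻¹)
    (L1 L2 L3 : ℝ)
    (hL1 : Filter.Tendsto (fun n : ℕ => (F1.rowing (List.replicate n 0)).lam1)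
      Filter.atTop (nhds L1))
    (hL2 : Filter.Tendsto (fun n : ℕ => (F2.rowing (List.replicate n 0)).lam1)
      Filter.atTop (nhds L2))
    (hL3 : Filter.Tendsto (fun n : ℕ => (F3.rowing (List.replicate n 0)).lam1)
      Filter.atTop (nhds L3)) :
    ∀ x ∈ Set.Ioo (-Real.sqrt (2 + Real.sqrt 5)) (-lamStar),
      x ∈ Set.Ioo (F1.rowing (List.replicate 8 1)).lam1 L1 ∨
      x ∈ Set.Ioo (F2.rowing (List.replicate 8 1)).lam1 L2 ∨
      x ∈ Set.Ioo (F3.rowing (List.replicate 8 1)).lam1 L3 := by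
  have hρ0 : 0 < ρ := by nlinarith [sq_nonneg ρ, sq_nonneg (ρ + 1)]
  have hsqrt6 : √ρ ^ 6 = √ρ ^ 2 + 1 := by
    rw [show √ρ ^ 6 = (√ρ ^ 2) ^ 3 by ring, Real.sq_sqrt hρ0.le, hρ]
  refine mem_Ioo_or_mem_Ioo_or_mem_Ioo ?_ ?_ ?_ ?_
  · linarith [lam1_F3_rowing_ones_lt, sqrt_two_add_sqrt_five_le]
  · exact lam1_F2_rowing_ones_lt.trans_le (dominatesRoot_F3.neg_le_of_tendsto (by norm_num) hL3)
  · exact lam1_F1_rowing_ones_lt.trans_le (dominatesRoot_F2.neg_le_of_tendsto (by norm_num) hL2)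
  · exact hlamStar ▸ (dominatesRoot_F1 hsqrt6).neg_le_of_tendsto (Real.sqrt_pos.mpr hρ0) hL1
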